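/- Let p ∈ [0,1]. The sum of the depolarizing weights of the four patterns IIII, XXXX, YYYY, ZZZZ equals (1−p)⁴ + 3(p/3)⁴ = 1 − 4p + 6p² − 4p³ + 28p⁴/27. Moreover the polynomial D(p) = 1 − 4p + 8p² − 64p³/9 + 64p⁴/27 is positive on [0,1], so the success probability of the two-logical-qubit error-detection scheme using two noisy EPR pairs equals p_s(p) = (1 − 4p + 6p² − 4p³ + 28p⁴/27)/(1 − 4p + 8p² − 64p³/9 + 64p⁴/27). -/

import Mathlib

/-- Pauli labels `{I, X, Y, Z}`. -/
inductive Pauli | I | X | Y | Z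
deriving DecidableEq, Repr

instance : Fintype Pauli :=
  ⟨{.I, .X, .Y, .Z}, by intro x; cases x <;> decide⟩

/-- The depolarizing weight of a Pauli label: `1 - p` for `I` and `p/3` for `X`, `Y`, `Z`. -/
noncomputable def w (p : ℝ) : Pauli → ℝ
  | .I => 1 - p
  | _ => p / 3

/-- The depolarizing weight of a 4-tuple: the product of the weights of its components. -/
noncomputable def w4 (p : ℝ) (t : Pauli × Pauli × Pauli × Pauli) : ℝ :=
  w p t.1 * w p t.2.1 * w p t.2.2.1 * w p t.2.2.2

/-- The components of a 4-tuple of Pauli labels, as a list. -/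
def comps (t : Pauli × Pauli × Pauli × Pauli) : List Pauli :=
  [t.1, t.2.1, t.2.2.1, t.2.2.2]

/-- The number of X-type components (labels in `{X, Y}`) of a 4-tuple. -/
def xCount (t : Pauli × Pauli × Pauli × Pauli) : ℕ :=
  (comps t).countP (fun P => P = Pauli.X || P = Pauli.Y)

/-- The number of Z-type components (labels in `{Y, Z}`) of a 4-tuple. -/
def zCount (t : Pauli × Pauli × Pauli × Pauli) : ℕ :=
  (comps t).countP (fun P => P = Pauli.Y || P = Pauli.Z)

/-- The set of syndrome-zero 4-tuple error patterns of the two-logical-qubit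
error-detection scheme using two noisy EPR pairs. -/
def T : Finset (Pauli × Pauli × Pauli × Pauli) :=
  Finset.univ.filter (fun t => Even (xCount t) ∧ Even (zCount t))

/-- The four patterns `IIII, XXXX, YYYY, ZZZZ` leaving the two logical qubits in their
legitimate state. -/
def Q : Finset (Pauli × Pauli × Pauli × Pauli) :=
  {(.I, .I, .I, .I), (.X, .X, .X, .X), (.Y, .Y, .Y, .Y), (.Z, .Z, .Z, .Z)}

/-- The denominator polynomial `D(p) = 1 − 4p + 8p² − 64p³/9 + 64p⁴/27`. -/
noncomputable def D (p : ℝ) : ℝ := 1 - 4*p + 8*p^2 - 64*p^3/9 + 64*p^4/27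

lemma sum_Q_w4 (p : ℝ) : ∑ t ∈ Q, w4 p t = (1 - p)^4 + 3*(p/3)^4 := by
  simp only [Q, Finset.sum_insert, Finset.mem_insert, Finset.mem_singleton,
    Finset.sum_singleton, Prod.mk.injEq, w4, w, reduceCtorEq, false_and, or_self,
    not_false_eq_true]
  ring

/- `D p` is the weight of `T`; averaging over the four parity characters that cut out `T`
gives this form, since one label's weights sum to `1` against the trivial character and to
`1 - 4p/3` against each of the others. It makes `D` positive on all of `ℝ`. -/
lemma D_eq (p : ℝ) : D p = (1 + 3*(1 - 4*p/3)^4) / 4 := by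
  unfold D
  ring

lemma D_pos (p : ℝ) : 0 < D p := by
  rw [D_eq]
  positivity

theorem stmt11_general (p : ℝ) :
    (∑ t ∈ Q, w4 p t) = (1 - p)^4 + 3*(p/3)^4 ∧
    (1 - p)^4 + 3*(p/3)^4 = 1 - 4*p + 6*p^2 - 4*p^3 + 28*p^4/27 ∧
    0 < D p ∧
    (∑ t ∈ Q, w4 p t) / D p
      = (1 - 4*p + 6*p^2 - 4*p^3 + 28*p^4/27) / (1 - 4*p + 8*p^2 - 64*p^3/9 + 64*p^4/27) := by
  have hexpand : (1 - p)^4 + 3*(p/3)^4 = 1 - 4*p + 6*p^2 - 4*p^3 + 28*p^4/27 := by ring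
  refine ⟨sum_Q_w4 p, hexpand, D_pos p, ?_⟩
  rw [sum_Q_w4, hexpand, D]

theorem stmt11 (p : ℝ) (hp : p ∈ Set.Icc (0 : ℝ) 1) :
    (∑ t ∈ Q, w4 p t) = (1 - p)^4 + 3*(p/3)^4 ∧
    (1 - p)^4 + 3*(p/3)^4 = 1 - 4*p + 6*p^2 - 4*p^3 + 28*p^4/27 ∧
    0 < D p ∧
    (∑ t ∈ Q, w4 p t) / D p
      = (1 - 4*p + 6*p^2 - 4*p^3 + 28*p^4/27) / (1 - 4*p + 8*p^2 - 64*p^3/9 + 64*p^4/27) :=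
  stmt11_general p
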